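/- A Hermitian twisted cartesian product (g1 ⋈ g2, J, k) is locally conformally balanced (dθ = 0) if and only if (g1, J1, k1) and (g2, J2, k2) are both locally conformally balanced (dθ1 = 0 and dθ2 = 0) and for all x ∈ g1, a ∈ g2: θ1(ρ2(a)x) − θ2(ρ1(x)a) = tr(ρ1(ρ2(a)x)) − tr(ρ2(ρ1(x)a)). -/

import Mathlib

open scoped BigOperators

section TCPDefs

variable {V V₁ V₂ W : Type*} [AddCommGroup V] [Module ℝ V]
  [AddCommGroup V₁] [Module ℝ V₁] [AddCommGroup V₂] [Module ℝ V₂]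
  [AddCommGroup W] [Module ℝ W]

/-- Real-bilinearity of a two-argument map. -/
def IsBilinMap (f : V₁ → V₂ → W) : Prop :=
  (∀ x y z, f (x + y) z = f x z + f y z) ∧ (∀ (c : ℝ) x z, f (c • x) z = c • f x z) ∧
  (∀ x y z, f x (y + z) = f x y + f x z) ∧ (∀ (c : ℝ) x z, f x (c • z) = c • f x z)

/-- The Jacobi identity for a bracket. -/
def Jacobi (l : V → V → V) : Prop :=
  ∀ u v w, l (l u v) w + l (l v w) u + l (l w u) v = 0

/-- A (real) Lie bracket: bilinear, antisymmetric, Jacobi. -/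
def IsLieBracket (l : V → V → V) : Prop :=
  IsBilinMap l ∧ (∀ u v, l u v = -l v u) ∧ Jacobi l

/-- D is a derivation of the bracket l. -/
def IsDeriv (l : V → V → V) (D : V → V) : Prop :=
  ∀ u v, D (l u v) = l (D u) v + l u (D v)

/-- Compatibility of the couple (ρ1, ρ2). -/
def Compat (ρ1 : V₁ → V₂ → V₂) (ρ2 : V₂ → V₁ → V₁) : Prop :=
  (∀ (x : V₁) (a b : V₂), ρ1 (ρ2 a x) b = ρ1 (ρ2 b x) a) ∧
  (∀ (x y : V₁) (a : V₂), ρ2 (ρ1 x a) y = ρ2 (ρ1 y a) x)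

/-- The twisted cartesian product bracket on V₁ × V₂. -/
def twBr (l1 : V₁ → V₁ → V₁) (l2 : V₂ → V₂ → V₂)
    (ρ1 : V₁ → V₂ → V₂) (ρ2 : V₂ → V₁ → V₁) (u v : V₁ × V₂) : V₁ × V₂ :=
  (l1 u.1 v.1 + ρ2 u.2 v.1 - ρ2 v.2 u.1, l2 u.2 v.2 + ρ1 u.1 v.2 - ρ1 v.1 u.2)

/-- The product almost complex structure. -/
def prodJ (J1 : V₁ → V₁) (J2 : V₂ → V₂) (u : V₁ × V₂) : V₁ × V₂ := (J1 u.1, J2 u.2)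

/-- The product metric. -/
def prodK (k1 : V₁ → V₁ → ℝ) (k2 : V₂ → V₂ → ℝ) (u v : V₁ × V₂) : ℝ :=
  k1 u.1 v.1 + k2 u.2 v.2

/-- Nijenhuis tensor of J with respect to the bracket l. -/
def nijenhuis (l : V → V → V) (J : V → V) (u v : V) : V :=
  l (J u) (J v) - l u v - J (l (J u) v + l u (J v))

/-- Fundamental 2-form ω(u,v) = k(Ju, v). -/
def fund (k : V → V → ℝ) (J : V → V) (u v : V) : ℝ := k (J u) v

/-- Chevalley–Eilenberg differential of a 2-form. -/
def d2 (l : V → V → V) (ω : V → V → ℝ) (u v w : V) : ℝ :=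
  -ω (l u v) w + ω (l u w) v - ω (l v w) u

/-- Chevalley–Eilenberg differential of a 1-form. -/
def d1 (l : V → V → V) (θ : V → ℝ) (u v : V) : ℝ := -θ (l u v)

/-- Wedge product of a 1-form with a 2-form, evaluated on three vectors. -/
def wedge12 (θ : V → ℝ) (ω : V → V → ℝ) (u v w : V) : ℝ :=
  θ u * ω v w - θ v * ω u w + θ w * ω u v

/-- The Koszul formula characterizing the Levi-Civita product of (g, k). -/
def IsLeviCivita (k : V → V → ℝ) (l : V → V → V) (nab : V → V → V) : Prop :=
  ∀ u v w, 2 * k (nab u v) w = k (l u v) w - k (l v w) u - k (l u w) v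

/-- Codifferential of a 2-form ω relative to a family E (an orthonormal basis)
    and a Levi-Civita product nab:  d*ω(X) = −Σ_i (∇_{E_i}ω)(E_i, X). -/
def codiff {ι : Type*} [Fintype ι] (E : ι → V) (nab : V → V → V)
    (ω : V → V → ℝ) (X : V) : ℝ :=
  -∑ i, (-(ω (nab (E i) (E i)) X) - ω (E i) (nab (E i) X))

/-- Lee form θ = −d*ω ∘ J. -/
def leeForm {ι : Type*} [Fintype ι] (E : ι → V) (nab : V → V → V)
    (k : V → V → ℝ) (J : V → V) (X : V) : ℝ :=
  -codiff E nab (fund k J) (J X)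

/-- A family is orthonormal with respect to k. -/
def Orthonormal' {ι : Type*} [DecidableEq ι] (k : V → V → ℝ) (E : ι → V) : Prop :=
  ∀ i j, k (E i) (E j) = if i = j then 1 else 0

/-- k is an inner product: symmetric, bilinear, positive definite. -/
def IsInner (k : V → V → ℝ) : Prop :=
  IsBilinMap k ∧ (∀ u v, k u v = k v u) ∧ (∀ u, u ≠ 0 → 0 < k u u)

/-- A Hermitian structure on the Lie algebra (V, l). -/
def IsHermitian (l : V → V → V) (J : V → V) (k : V → V → ℝ) : Prop :=
  IsInner k ∧ (∀ u, J (J u) = -u) ∧ (∀ u v, nijenhuis l J u v = 0) ∧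
  (∀ u v, k (J u) (J v) = k u v)

end TCPDefs

/-!
Eliminating the Levi-Civita product by the Koszul formula writes the Lee form as a sum, over an
orthonormal basis, of terms built from the bracket, the metric and `J` alone (`leeTerm`). In the
adapted basis of `g₁ ⋈ g₂` the summand at `(e, 0)` is that of `g₁` corrected by `-k₁(ρ₂(a)e, e)`:
the other `ρ₂`-terms cancel because `ρ₂(a)` commutes with the `k₁`-skew map `J₁`. Symmetrically at
`(0, f)`, so `θ(x, a) = (θ₁ - tr ∘ ρ₁)(x) + (θ₂ - tr ∘ ρ₂)(a)`. Traces of commutators vanish, so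
`tr ∘ ρᵢ` kills brackets, and evaluating `dθ` on pairs from `g₁ × g₁`, `g₂ × g₂` and `g₁ × g₂`
yields the three conditions.
-/

section Bilinear

variable {V₁ V₂ W : Type*} [AddCommGroup V₁] [Module ℝ V₁] [AddCommGroup V₂] [Module ℝ V₂]
  [AddCommGroup W] [Module ℝ W]

namespace IsBilinMap

variable {f : V₁ → V₂ → W}

def toLinearMap₂ (hf : IsBilinMap f) : V₁ →ₗ[ℝ] V₂ →ₗ[ℝ] W :=
  LinearMap.mk₂ ℝ f hf.1 hf.2.1 hf.2.2.1 hf.2.2.2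

theorem add_left (hf : IsBilinMap f) (x y : V₁) (z : V₂) : f (x + y) z = f x z + f y z :=
  hf.1 x y z

theorem add_right (hf : IsBilinMap f) (x : V₁) (y z : V₂) : f x (y + z) = f x y + f x z :=
  hf.2.2.1 x y z

theorem smul_left (hf : IsBilinMap f) (c : ℝ) (x : V₁) (y : V₂) : f (c • x) y = c • f x y :=
  hf.2.1 c x y

theorem smul_right (hf : IsBilinMap f) (c : ℝ) (x : V₁) (y : V₂) : f x (c • y) = c • f x y :=
  hf.2.2.2 c x y

theorem zero_left (hf : IsBilinMap f) (y : V₂) : f 0 y = 0 :=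
  hf.toLinearMap₂.map_zero₂ y

theorem zero_right (hf : IsBilinMap f) (x : V₁) : f x 0 = 0 :=
  (hf.toLinearMap₂ x).map_zero

theorem neg_left (hf : IsBilinMap f) (x : V₁) (y : V₂) : f (-x) y = -f x y :=
  hf.toLinearMap₂.map_neg₂ x y

theorem sub_left (hf : IsBilinMap f) (x y : V₁) (z : V₂) : f (x - y) z = f x z - f y z :=
  hf.toLinearMap₂.map_sub₂ x y z

theorem sum_left (hf : IsBilinMap f) {ι : Type*} (s : Finset ι) (g : ι → V₁) (y : V₂) :
    f (∑ i ∈ s, g i) y = ∑ i ∈ s, f (g i) y :=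
  hf.toLinearMap₂.map_sum₂ s g y

theorem prodK {k1 : V₁ → V₁ → ℝ} {k2 : V₂ → V₂ → ℝ} (hk1 : IsBilinMap k1)
    (hk2 : IsBilinMap k2) : IsBilinMap (prodK k1 k2) := by
  refine ⟨fun u v w => ?_, fun c u w => ?_, fun u v w => ?_, fun c u w => ?_⟩ <;>
    simp only [_root_.prodK, Prod.fst_add, Prod.snd_add, Prod.smul_fst, Prod.smul_snd,
      hk1.add_left, hk2.add_left, hk1.smul_left, hk2.smul_left, hk1.add_right, hk2.add_right,
      hk1.smul_right, hk2.smul_right, smul_eq_mul] <;>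
    ring

end IsBilinMap

end Bilinear

section LeeForm

variable {V : Type*} [AddCommGroup V] [Module ℝ V]

theorem IsLieBracket.bilin {l : V → V → V} (hl : IsLieBracket l) : IsBilinMap l := hl.1

theorem IsLieBracket.self_eq_zero {l : V → V → V} (hl : IsLieBracket l) (u : V) : l u u = 0 := by
  have h : (2 : ℝ) • l u u = 0 := by
    rw [two_smul]; nth_rewrite 1 [hl.2.1 u u]; exact neg_add_cancel _
  exact (smul_eq_zero.mp h).resolve_left two_ne_zero

namespace IsHermitian

variable {l : V → V → V} {J : V → V} {k : V → V → ℝ}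

theorem bilin (hH : IsHermitian l J k) : IsBilinMap k := hH.1.1

theorem symm (hH : IsHermitian l J k) (u v : V) : k u v = k v u := hH.1.2.1 u v

theorem isometry (hH : IsHermitian l J k) (u v : V) : k (J u) (J v) = k u v := hH.2.2.2 u v

theorem apply_J_left (hH : IsHermitian l J k) (u v : V) : k (J u) v = -k u (J v) := by
  rw [← hH.isometry (J u), hH.2.1, hH.bilin.neg_left]

end IsHermitian

theorem LinearMap.trace_eq_sum_of_orthonormal {ι : Type*} [Fintype ι] [DecidableEq ι]
    {k : V → V → ℝ} (hk : IsBilinMap k) (b : Module.Basis ι ℝ V) (hb : Orthonormal' k b)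
    (T : Module.End ℝ V) :
    LinearMap.trace ℝ V T = ∑ i, k (T (b i)) (b i) := by
  rw [LinearMap.trace_eq_matrix_trace ℝ b T, Matrix.trace]
  refine Finset.sum_congr rfl fun i _ => ?_
  conv_rhs => rw [← b.sum_repr (T (b i)), hk.sum_left]
  simp [hk.smul_left, hb _ i, LinearMap.toMatrix_apply]

noncomputable def leeTerm (l : V → V → V) (k : V → V → ℝ) (J : V → V) (e X : V) : ℝ :=
  k (l e X) e - k (l e (J X)) (J e) / 2 + k (l (J X) (J e)) e / 2 + k (l e (J e)) (J X) / 2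

theorem leeForm_eq_sum_leeTerm {ι : Type*} [Fintype ι] {l nab : V → V → V} {k : V → V → ℝ}
    {J : V → V} (hl : ∀ u, l u u = 0) (hk : IsBilinMap k) (hk_symm : ∀ u v, k u v = k v u)
    (hJ : ∀ u v, k (J u) (J v) = k u v) (hnab : IsLeviCivita k l nab) (E : ι → V) (X : V) :
    leeForm E nab k J X = ∑ i, leeTerm l k J (E i) X := by
  simp only [leeForm, codiff, fund, neg_neg]
  refine Finset.sum_congr rfl fun i _ => ?_
  have h1 := hnab (E i) (E i) X
  have h2 := hnab (E i) (J X) (J (E i))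
  rw [hl, hk.zero_left] at h1
  rw [leeTerm, hJ, hk_symm (J (E i))]
  linarith

theorem leeTerm_add {l : V → V → V} {k : V → V → ℝ} (hl : IsBilinMap l) (hk : IsBilinMap k)
    (J : Module.End ℝ V) (e X Y : V) :
    leeTerm l k J e (X + Y) = leeTerm l k J e X + leeTerm l k J e Y := by
  simp only [leeTerm, map_add, hl.add_left, hl.add_right, hk.add_left, hk.add_right]
  ring

theorem leeForm_add {ι : Type*} [Fintype ι] {l nab : V → V → V} {k : V → V → ℝ}
    {J : Module.End ℝ V} (hl : IsLieBracket l) (hH : IsHermitian l J k)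
    (hnab : IsLeviCivita k l nab) (E : ι → V) (X Y : V) :
    leeForm E nab k J (X + Y) = leeForm E nab k J X + leeForm E nab k J Y := by
  simp only [leeForm_eq_sum_leeTerm hl.self_eq_zero hH.bilin hH.symm hH.isometry hnab,
    leeTerm_add hl.bilin hH.bilin, Finset.sum_add_distrib]

end LeeForm

section TwistedProduct

variable {V₁ V₂ : Type*} {k1 : V₁ → V₁ → ℝ} {k2 : V₂ → V₂ → ℝ}

theorem prodK_symm (hk1 : ∀ x y, k1 x y = k1 y x) (hk2 : ∀ a b, k2 a b = k2 b a)
    (u v : V₁ × V₂) : prodK k1 k2 u v = prodK k1 k2 v u := by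
  simp only [prodK, hk1 u.1, hk2 u.2]

theorem prodK_prodJ {J1 : V₁ → V₁} {J2 : V₂ → V₂} (hJ1 : ∀ x y, k1 (J1 x) (J1 y) = k1 x y)
    (hJ2 : ∀ a b, k2 (J2 a) (J2 b) = k2 a b) (u v : V₁ × V₂) :
    prodK k1 k2 (prodJ J1 J2 u) (prodJ J1 J2 v) = prodK k1 k2 u v := by
  simp only [prodK, prodJ, hJ1, hJ2]

variable [AddCommGroup V₁] [AddCommGroup V₂] {l1 : V₁ → V₁ → V₁} {l2 : V₂ → V₂ → V₂}

theorem twBr_self (ρ1 : V₁ → V₂ → V₂) (ρ2 : V₂ → V₁ → V₁) (hl1 : ∀ x, l1 x x = 0)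
    (hl2 : ∀ a, l2 a a = 0) (u : V₁ × V₂) : twBr l1 l2 ρ1 ρ2 u u = 0 := by
  simp [twBr, hl1, hl2]

theorem leeTerm_twBr_swap (ρ1 : V₁ → V₂ → V₂) (ρ2 : V₂ → V₁ → V₁) (J1 : V₁ → V₁)
    (J2 : V₂ → V₂) (e X : V₁ × V₂) :
    leeTerm (twBr l1 l2 ρ1 ρ2) (prodK k1 k2) (prodJ J1 J2) e X =
      leeTerm (twBr l2 l1 ρ2 ρ1) (prodK k2 k1) (prodJ J2 J1) e.swap X.swap := by
  simp only [leeTerm, twBr, prodK, prodJ, Prod.fst_swap, Prod.snd_swap]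
  ring

variable [Module ℝ V₁] [Module ℝ V₂]

theorem leeTerm_twBr_inl {J1 : Module.End ℝ V₁} {J2 : Module.End ℝ V₂}
    (hl2 : IsBilinMap l2) (hH1 : IsHermitian l1 J1 k1) (hk2 : IsBilinMap k2)
    (ρ1 : V₁ →ₗ[ℝ] Module.End ℝ V₂) (ρ2 : V₂ →ₗ[ℝ] Module.End ℝ V₁)
    (hcomm2 : ∀ a, ρ2 a * J1 = J1 * ρ2 a) (e x : V₁) (a : V₂) :
    leeTerm (twBr l1 l2 (fun x a => ρ1 x a) (fun a x => ρ2 a x)) (prodK k1 k2) (prodJ J1 J2)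
        (e, 0) (x, a) =
      leeTerm l1 k1 J1 e x - k1 (ρ2 a e) e := by
  have hρJ : ρ2 (J2 a) (J1 e) = J1 (ρ2 (J2 a) e) := LinearMap.congr_fun (hcomm2 (J2 a)) e
  have hskew := hH1.apply_J_left (ρ2 (J2 a) e) e
  simp only [leeTerm, twBr, prodK, prodJ, map_zero, LinearMap.zero_apply, hl2.zero_left,
    hl2.zero_right, hk2.zero_left, hk2.zero_right, hH1.bilin.add_left, hH1.bilin.sub_left,
    add_zero, sub_zero, zero_sub]
  rw [hρJ]
  linarith

theorem leeTerm_twBr_inr {J1 : Module.End ℝ V₁} {J2 : Module.End ℝ V₂}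
    (hl1 : IsBilinMap l1) (hH2 : IsHermitian l2 J2 k2) (hk1 : IsBilinMap k1)
    (ρ1 : V₁ →ₗ[ℝ] Module.End ℝ V₂) (ρ2 : V₂ →ₗ[ℝ] Module.End ℝ V₁)
    (hcomm1 : ∀ x, ρ1 x * J2 = J2 * ρ1 x) (x : V₁) (f a : V₂) :
    leeTerm (twBr l1 l2 (fun x a => ρ1 x a) (fun a x => ρ2 a x)) (prodK k1 k2) (prodJ J1 J2)
        (0, f) (x, a) =
      leeTerm l2 k2 J2 f a - k2 (ρ1 x f) f := by
  rw [leeTerm_twBr_swap]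
  exact leeTerm_twBr_inl hl1 hH2 hk1 ρ2 ρ1 hcomm1 f a x

theorem leeForm_twBr {J1 : Module.End ℝ V₁} {J2 : Module.End ℝ V₂}
    (hl1 : IsLieBracket l1) (hl2 : IsLieBracket l2)
    (hH1 : IsHermitian l1 J1 k1) (hH2 : IsHermitian l2 J2 k2)
    (ρ1 : V₁ →ₗ[ℝ] Module.End ℝ V₂) (ρ2 : V₂ →ₗ[ℝ] Module.End ℝ V₁)
    (hcomm1 : ∀ x, ρ1 x * J2 = J2 * ρ1 x) (hcomm2 : ∀ a, ρ2 a * J1 = J1 * ρ2 a)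
    {ι₁ ι₂ : Type*} [Fintype ι₁] [DecidableEq ι₁] [Fintype ι₂] [DecidableEq ι₂]
    (b1 : Module.Basis ι₁ ℝ V₁) (hb1 : Orthonormal' k1 b1)
    (b2 : Module.Basis ι₂ ℝ V₂) (hb2 : Orthonormal' k2 b2)
    {nab1 : V₁ → V₁ → V₁} (hnab1 : IsLeviCivita k1 l1 nab1)
    {nab2 : V₂ → V₂ → V₂} (hnab2 : IsLeviCivita k2 l2 nab2)
    {nab : V₁ × V₂ → V₁ × V₂ → V₁ × V₂}
    (hnab : IsLeviCivita (prodK k1 k2) (twBr l1 l2 (fun x a => ρ1 x a) (fun a x => ρ2 a x)) nab)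
    (u : V₁ × V₂) :
    leeForm (Sum.elim (fun i => (b1 i, 0)) (fun j => (0, b2 j))) nab (prodK k1 k2)
        (prodJ J1 J2) u =
      (leeForm b1 nab1 k1 J1 u.1 - LinearMap.trace ℝ V₂ (ρ1 u.1)) +
        (leeForm b2 nab2 k2 J2 u.2 - LinearMap.trace ℝ V₁ (ρ2 u.2)) := by
  rw [leeForm_eq_sum_leeTerm (twBr_self _ _ hl1.self_eq_zero hl2.self_eq_zero)
      (hH1.bilin.prodK hH2.bilin) (prodK_symm hH1.symm hH2.symm)
      (prodK_prodJ hH1.isometry hH2.isometry) hnab,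
    leeForm_eq_sum_leeTerm hl1.self_eq_zero hH1.bilin hH1.symm hH1.isometry hnab1,
    leeForm_eq_sum_leeTerm hl2.self_eq_zero hH2.bilin hH2.symm hH2.isometry hnab2,
    LinearMap.trace_eq_sum_of_orthonormal hH1.bilin b1 hb1,
    LinearMap.trace_eq_sum_of_orthonormal hH2.bilin b2 hb2, Fintype.sum_sum_type]
  simp only [Sum.elim_inl, Sum.elim_inr,
    leeTerm_twBr_inl hl2.bilin hH1 hH2.bilin ρ1 ρ2 hcomm2,
    leeTerm_twBr_inr hl1.bilin hH2 hH1.bilin ρ1 ρ2 hcomm1, Finset.sum_sub_distrib]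
  ring

theorem forall_twBr_eq_zero_iff {M : Type*} [AddCommGroup M] (hl1 : IsBilinMap l1)
    (hl2 : IsBilinMap l2) (ρ1 : V₁ →ₗ[ℝ] Module.End ℝ V₂) (ρ2 : V₂ →ₗ[ℝ] Module.End ℝ V₁)
    (f1 : V₁ →+ M) (f2 : V₂ →+ M) :
    (∀ u v, f1 (twBr l1 l2 (fun x a => ρ1 x a) (fun a x => ρ2 a x) u v).1 +
        f2 (twBr l1 l2 (fun x a => ρ1 x a) (fun a x => ρ2 a x) u v).2 = 0) ↔
      (∀ x y, f1 (l1 x y) = 0) ∧ (∀ a b, f2 (l2 a b) = 0) ∧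
        ∀ x a, f1 (ρ2 a x) = f2 (ρ1 x a) := by
  constructor
  · intro h
    refine ⟨fun x y => ?_, fun a b => ?_, fun x a => ?_⟩
    · simpa [twBr, hl2.zero_left] using h (x, 0) (y, 0)
    · simpa [twBr, hl1.zero_left] using h (0, a) (0, b)
    · simpa [twBr, hl1.zero_right, hl2.zero_left, neg_add_eq_zero] using h (x, 0) (0, a)
  · rintro ⟨h1, h2, h3⟩ ⟨x, a⟩ ⟨y, b⟩
    simp only [twBr, map_add, map_sub, h1, h2, h3]
    abel

end TwistedProduct

theorem lcb_iff_of_twisted_product_general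
    {V₁ V₂ : Type*} [AddCommGroup V₁] [Module ℝ V₁] [FiniteDimensional ℝ V₁]
    [AddCommGroup V₂] [Module ℝ V₂] [FiniteDimensional ℝ V₂]
    (l1 : V₁ → V₁ → V₁) (l2 : V₂ → V₂ → V₂)
    (hl1 : IsLieBracket l1) (hl2 : IsLieBracket l2)
    (J1 : Module.End ℝ V₁) (J2 : Module.End ℝ V₂)
    (k1 : V₁ → V₁ → ℝ) (k2 : V₂ → V₂ → ℝ)
    (hH1 : IsHermitian l1 (⇑J1) k1) (hH2 : IsHermitian l2 (⇑J2) k2)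
    (ρ1 : V₁ →ₗ[ℝ] Module.End ℝ V₂) (ρ2 : V₂ →ₗ[ℝ] Module.End ℝ V₁)
    (hrep1 : ∀ x y, ρ1 (l1 x y) = ρ1 x * ρ1 y - ρ1 y * ρ1 x)
    (hrep2 : ∀ a b, ρ2 (l2 a b) = ρ2 a * ρ2 b - ρ2 b * ρ2 a)
    (hcomm1 : ∀ x : V₁, ρ1 x * J2 = J2 * ρ1 x)
    (hcomm2 : ∀ a : V₂, ρ2 a * J1 = J1 * ρ2 a)
    {ι₁ ι₂ : Type*} [Fintype ι₁] [DecidableEq ι₁] [Fintype ι₂] [DecidableEq ι₂]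
    (b1 : Module.Basis ι₁ ℝ V₁) (hb1 : Orthonormal' k1 ⇑b1)
    (b2 : Module.Basis ι₂ ℝ V₂) (hb2 : Orthonormal' k2 ⇑b2)
    (nab1 : V₁ → V₁ → V₁) (hnab1 : IsLeviCivita k1 l1 nab1)
    (nab2 : V₂ → V₂ → V₂) (hnab2 : IsLeviCivita k2 l2 nab2)
    (nab : V₁ × V₂ → V₁ × V₂ → V₁ × V₂)
    (hnab : IsLeviCivita (prodK k1 k2)
      (twBr l1 l2 (fun x a => ρ1 x a) (fun a x => ρ2 a x)) nab)
    :
    (∀ u v : V₁ × V₂,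
      d1 (twBr l1 l2 (fun x a => ρ1 x a) (fun a x => ρ2 a x))
        (leeForm (Sum.elim (fun i => ((b1 i : V₁), (0 : V₂)))
          (fun j => ((0 : V₁), (b2 j : V₂)))) nab (prodK k1 k2)
          (prodJ (⇑J1) (⇑J2))) u v = 0) ↔
      ((∀ x y : V₁, d1 l1 (leeForm (⇑b1) nab1 k1 (⇑J1)) x y = 0) ∧
       (∀ a b : V₂, d1 l2 (leeForm (⇑b2) nab2 k2 (⇑J2)) a b = 0) ∧
       (∀ (x : V₁) (a : V₂),
         leeForm (⇑b1) nab1 k1 (⇑J1) (ρ2 a x) - leeForm (⇑b2) nab2 k2 (⇑J2) (ρ1 x a) =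
           LinearMap.trace ℝ V₂ (ρ1 (ρ2 a x)) - LinearMap.trace ℝ V₁ (ρ2 (ρ1 x a)))) := by
  have htr1 (x y : V₁) : LinearMap.trace ℝ V₂ (ρ1 (l1 x y)) = 0 := by
    rw [hrep1, map_sub, LinearMap.trace_mul_comm, sub_self]
  have htr2 (a b : V₂) : LinearMap.trace ℝ V₁ (ρ2 (l2 a b)) = 0 := by
    rw [hrep2, map_sub, LinearMap.trace_mul_comm, sub_self]
  let θ1 : V₁ →+ ℝ := AddMonoidHom.mk' _ (leeForm_add hl1 hH1 hnab1 b1)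
  let θ2 : V₂ →+ ℝ := AddMonoidHom.mk' _ (leeForm_add hl2 hH2 hnab2 b2)
  let f1 := θ1 - ((LinearMap.trace ℝ V₂).comp ρ1).toAddMonoidHom
  let f2 := θ2 - ((LinearMap.trace ℝ V₁).comp ρ2).toAddMonoidHom
  simp only [d1, neg_eq_zero, leeForm_twBr hl1 hl2 hH1 hH2 ρ1 ρ2 hcomm1 hcomm2 b1 hb1 b2 hb2
    hnab1 hnab2 hnab]
  convert forall_twBr_eq_zero_iff hl1.bilin hl2.bilin ρ1 ρ2 f1 f2 using 0
  simp [f1, f2, θ1, θ2, htr1, htr2, sub_eq_sub_iff_sub_eq_sub]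

/-- a Hermitian twisted cartesian product is locally conformally
balanced iff both factors are LCB and the stated trace identity holds. -/
theorem lcb_iff_of_twisted_product
    {V₁ V₂ : Type*} [AddCommGroup V₁] [Module ℝ V₁] [FiniteDimensional ℝ V₁]
    [AddCommGroup V₂] [Module ℝ V₂] [FiniteDimensional ℝ V₂]
    (l1 : V₁ → V₁ → V₁) (l2 : V₂ → V₂ → V₂)
    (hl1 : IsLieBracket l1) (hl2 : IsLieBracket l2)
    (J1 : Module.End ℝ V₁) (J2 : Module.End ℝ V₂)
    (k1 : V₁ → V₁ → ℝ) (k2 : V₂ → V₂ → ℝ)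
    (hH1 : IsHermitian l1 (⇑J1) k1) (hH2 : IsHermitian l2 (⇑J2) k2)
    (ρ1 : V₁ →ₗ[ℝ] Module.End ℝ V₂) (ρ2 : V₂ →ₗ[ℝ] Module.End ℝ V₁)
    (hd1 : ∀ x, IsDeriv l2 (ρ1 x)) (hd2 : ∀ a, IsDeriv l1 (ρ2 a))
    (hrep1 : ∀ x y, ρ1 (l1 x y) = ρ1 x * ρ1 y - ρ1 y * ρ1 x)
    (hrep2 : ∀ a b, ρ2 (l2 a b) = ρ2 a * ρ2 b - ρ2 b * ρ2 a)
    (hcompat : Compat (fun x a => ρ1 x a) (fun a x => ρ2 a x))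
    (hcomm1 : ∀ x : V₁, ρ1 x * J2 = J2 * ρ1 x)
    (hcomm2 : ∀ a : V₂, ρ2 a * J1 = J1 * ρ2 a)
    {ι₁ ι₂ : Type*} [Fintype ι₁] [DecidableEq ι₁] [Fintype ι₂] [DecidableEq ι₂]
    (b1 : Module.Basis ι₁ ℝ V₁) (hb1 : Orthonormal' k1 ⇑b1)
    (b2 : Module.Basis ι₂ ℝ V₂) (hb2 : Orthonormal' k2 ⇑b2)
    (nab1 : V₁ → V₁ → V₁) (hnab1 : IsLeviCivita k1 l1 nab1)
    (nab2 : V₂ → V₂ → V₂) (hnab2 : IsLeviCivita k2 l2 nab2)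
    (nab : V₁ × V₂ → V₁ × V₂ → V₁ × V₂)
    (hnab : IsLeviCivita (prodK k1 k2)
      (twBr l1 l2 (fun x a => ρ1 x a) (fun a x => ρ2 a x)) nab)
    :
    (∀ u v : V₁ × V₂,
      d1 (twBr l1 l2 (fun x a => ρ1 x a) (fun a x => ρ2 a x))
        (leeForm (Sum.elim (fun i => ((b1 i : V₁), (0 : V₂)))
          (fun j => ((0 : V₁), (b2 j : V₂)))) nab (prodK k1 k2)
          (prodJ (⇑J1) (⇑J2))) u v = 0) ↔
      ((∀ x y : V₁, d1 l1 (leeForm (⇑b1) nab1 k1 (⇑J1)) x y = 0) ∧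
       (∀ a b : V₂, d1 l2 (leeForm (⇑b2) nab2 k2 (⇑J2)) a b = 0) ∧
       (∀ (x : V₁) (a : V₂),
         leeForm (⇑b1) nab1 k1 (⇑J1) (ρ2 a x) - leeForm (⇑b2) nab2 k2 (⇑J2) (ρ1 x a) =
           LinearMap.trace ℝ V₂ (ρ1 (ρ2 a x)) - LinearMap.trace ℝ V₁ (ρ2 (ρ1 x a)))) :=
  lcb_iff_of_twisted_product_general l1 l2 hl1 hl2 J1 J2 k1 k2 hH1 hH2 ρ1 ρ2 hrep1 hrep2 hcomm1
    hcomm2 b1 hb1 b2 hb2 nab1 hnab1 nab2 hnab2 nab hnab
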